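/- Let S : [0, T] → ℝ be continuous, ξ ∈ ℝ, n > 0, ε > 0 and t ∈ [0, T] with t + ε ≤ T. Define S̃_t^n := e^{n(t−T)}(ξ − S(t)) + ∫_t^T n e^{n(t−s)} (S(s) − S(t)) ds. Then |S̃_t^n| ≤ e^{n(t−T)} |ξ − S(t)| + e^{−nε} sup_{s ∈ [t+ε, T]} |S(s) − S(t)| + sup_{s ∈ [t, t+ε]} |S(s) − S(t)|. -/

import Mathlib

/-!
Split `∫_t^T` at `t + ε`. On each piece `|S s - S t|` is at most its supremum there, and the
kernel `n e^{n(t-s)}` is positive with mass `e^{n(t-a)} - e^{n(t-b)}` on `[a, b]`: at most `1` on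
`[t, t+ε]` and at most `e^{-nε}` on `[t+ε, T]`.
-/

open Real Set intervalIntegral

theorem integral_mul_exp_mul_sub (n t a b : ℝ) :
    ∫ s in a..b, n * exp (n * (t - s)) = exp (n * (t - a)) - exp (n * (t - b)) := by
  have hderiv : ∀ s ∈ uIcc a b,
      HasDerivAt (fun s => -exp (n * (t - s))) (n * exp (n * (t - s))) s := fun s _ => by
    have h : HasDerivAt (fun s => n * (t - s)) (-n) s := by
      simpa using ((hasDerivAt_id s).const_sub t).const_mul n
    exact h.exp.neg.congr_deriv (by ring)
  rw [integral_eq_sub_of_hasDerivAt hderiv (Continuous.intervalIntegrable (by fun_prop) _ _)]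
  ring

theorem abs_integral_mul_le_of_abs_le {w f : ℝ → ℝ} {a b M : ℝ} (hab : a ≤ b)
    (hw : ∀ s ∈ Icc a b, 0 ≤ w s) (hw_int : IntervalIntegrable w MeasureTheory.volume a b)
    (hf : ∀ s ∈ Icc a b, |f s| ≤ M) :
    |∫ s in a..b, w s * f s| ≤ M * ∫ s in a..b, w s := by
  rw [← intervalIntegral.integral_const_mul M, ← Real.norm_eq_abs]
  refine intervalIntegral.norm_integral_le_of_norm_le hab
    (Filter.Eventually.of_forall fun s hs => ?_) (hw_int.const_mul M)
  have hs : s ∈ Icc a b := Ioc_subset_Icc_self hs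
  rw [Real.norm_eq_abs, abs_mul, abs_of_nonneg (hw s hs), mul_comm M]
  exact mul_le_mul_of_nonneg_left (hf s hs) (hw s hs)

theorem abs_integral_exp_kernel_le {S : ℝ → ℝ} {n a b : ℝ} (t : ℝ) (hn : 0 ≤ n) (hab : a ≤ b)
    (hS : ContinuousOn S (Icc a b)) :
    |∫ s in a..b, n * exp (n * (t - s)) * (S s - S t)| ≤
      sSup ((fun s => |S s - S t|) '' Icc a b) * (exp (n * (t - a)) - exp (n * (t - b))) := by
  rw [← integral_mul_exp_mul_sub]
  exact abs_integral_mul_le_of_abs_le hab (fun s _ => by positivity)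
    (Continuous.intervalIntegrable (by fun_prop) _ _)
    fun s hs => ((hS.sub continuousOn_const).abs).le_sSup_image_Icc hs

theorem intervalIntegrable_exp_kernel_mul {S : ℝ → ℝ} {a b : ℝ} (n t : ℝ) (hab : a ≤ b)
    (hS : ContinuousOn S (Icc a b)) :
    IntervalIntegrable (fun s => n * exp (n * (t - s)) * (S s - S t)) MeasureTheory.volume a b :=
  ContinuousOn.intervalIntegrable (by rw [uIcc_of_le hab]; fun_prop)

theorem penalization_obstacle_estimate (T : ℝ) (S : ℝ → ℝ)
    (hS : ContinuousOn S (Set.Icc 0 T)) (ξ n ε t : ℝ)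
    (hn : 0 < n) (hε : 0 < ε) (ht : t ∈ Set.Icc 0 T) (htε : t + ε ≤ T) :
    |Real.exp (n * (t - T)) * (ξ - S t) +
        ∫ s in t..T, n * Real.exp (n * (t - s)) * (S s - S t)| ≤
      Real.exp (n * (t - T)) * |ξ - S t| +
        Real.exp (-n * ε) * sSup ((fun s => |S s - S t|) '' Set.Icc (t + ε) T) +
        sSup ((fun s => |S s - S t|) '' Set.Icc t (t + ε)) := by
  have htε' : t ≤ t + ε := by linarith
  have hS₁ : ContinuousOn S (Icc t (t + ε)) := hS.mono (Icc_subset_Icc ht.1 htε)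
  have hS₂ : ContinuousOn S (Icc (t + ε) T) := hS.mono (Icc_subset_Icc (ht.1.trans htε') le_rfl)
  rw [← integral_add_adjacent_intervals (intervalIntegrable_exp_kernel_mul n t htε' hS₁)
    (intervalIntegrable_exp_kernel_mul n t htε hS₂)]
  have hI₁ := abs_integral_exp_kernel_le t hn.le htε' hS₁
  have hI₂ := abs_integral_exp_kernel_le t hn.le htε hS₂
  have hexp : exp (n * (t - (t + ε))) = exp (-n * ε) := by ring_nf
  rw [sub_self, mul_zero, exp_zero, hexp] at hI₁
  rw [hexp] at hI₂
  have hM (a b : ℝ) : 0 ≤ sSup ((fun s => |S s - S t|) '' Icc a b) :=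
    Real.sSup_nonneg (forall_mem_image.2 fun _ _ => abs_nonneg _)
  calc _ ≤ |exp (n * (t - T)) * (ξ - S t)| +
          (|∫ s in t..t + ε, n * exp (n * (t - s)) * (S s - S t)| +
            |∫ s in t + ε..T, n * exp (n * (t - s)) * (S s - S t)|) :=
        (abs_add_le _ _).trans (add_le_add_right (abs_add_le _ _) _)
    _ ≤ _ := by
      rw [abs_mul, abs_of_pos (exp_pos _)]
      linarith [mul_nonneg (hM t (t + ε)) (exp_pos (-n * ε)).le,
        mul_nonneg (hM (t + ε) T) (exp_pos (n * (t - T))).le]
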